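/- arXiv:1911.12269 — 9 statements merged into one kernel-verified Lean document; each statement's English description precedes it below -/
import Mathlib

section
/- Let m1 ≥ m2 ≥ m3 > 0 with m1 + m2 + m3 = 1 and suppose m1·m2 + m2·m3 + m1·m3 ≤ 1/27. Then m1 > (√69 + 9)/18 and m2 + m3 < 1 − (√69 + 9)/18. -/
/-!
With `m1 + m2 + m3 = 1`, the Routh quantity is `m1 * (1 - m1) + m2 * m3`, so it strictly exceeds
`m1 * (1 - m1)`. The ordering forces `m1 ≥ 1/3`, and on `[1/3, 1]` the parabola `x * (1 - x)` drops
to `1/27` only beyond its larger root `(√69 + 9) / 18`.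
-/

open Real

lemma mul_one_sub_le_mul_one_sub {r x : ℝ} (hr : 1 - r ≤ x) (hx : x ≤ r) :
    r * (1 - r) ≤ x * (1 - x) := by
  nlinarith [mul_nonneg (sub_nonneg.2 hr) (sub_nonneg.2 hx)]

lemma sqrt_sixtyNine_add_nine_div_eighteen_lt {x : ℝ} (hx : 1 / 3 ≤ x)
    (h : x * (1 - x) < 1 / 27) : (√69 + 9) / 18 < x := by
  have hsq : √69 ^ 2 = 69 := sq_sqrt (by norm_num)
  have hroot : (√69 + 9) / 18 * (1 - (√69 + 9) / 18) = 1 / 27 := by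
    linear_combination (-1 / 324 : ℝ) * hsq
  have hthree : 3 < √69 := by nlinarith [sqrt_nonneg 69]
  by_contra! hle
  have := mul_one_sub_le_mul_one_sub (by linarith) hle
  linarith

theorem stmt_1 (m1 m2 m3 : ℝ) (h3 : 0 < m3) (h23 : m3 ≤ m2) (h12 : m2 ≤ m1)
    (hsum : m1 + m2 + m3 = 1)
    (hβ : m1*m2 + m2*m3 + m1*m3 ≤ 1/27) :
    m1 > (Real.sqrt 69 + 9) / 18 ∧ m2 + m3 < 1 - (Real.sqrt 69 + 9) / 18 := by
  have hβ_eq : m1*m2 + m2*m3 + m1*m3 = m1 * (1 - m1) + m2 * m3 := by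
    rw [show 1 - m1 = m2 + m3 by linarith]
    ring
  have hm23 : 0 < m2 * m3 := mul_pos (h3.trans_le h23) h3
  have hm1 : m1 > (√69 + 9) / 18 :=
    sqrt_sixtyNine_add_nine_div_eighteen_lt (by linarith) (by linarith)
  exact ⟨hm1, by linarith⟩
end

section
/- For β ∈ (0, 1/27), the quartic polynomial f(x) = x² + β^{3/2}·(4 − (λ5 + λ6)/β^{3/2})·x + λ5·λ6, where λ5 = (3/2)(1 − √(1 − 3β))β^{3/2} and λ6 = (3/2)(1 + √(1 − 3β))β^{3/2}, has two distinct negative real roots x (as a polynomial in x = s², i.e., the corresponding eigenvalues ±√x·i are purely imaginary and distinct) if and only if β < 1/27. Equivalently: the discriminant (4β^{3/2} − λ5 − λ6)² − 4λ5λ6 > 0, λ5λ6 > 0, and 4β^{3/2} > λ5 + λ6 hold simultaneously exactly when 0 < β < 1/27. -/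
/-! The eigenvalues are `λ₅, λ₆ = (3/2)(1 ∓ s)L` with `s² = 1 - 3β` and `L = β^{3/2} > 0`, so
`λ₅ + λ₆ = 3L` and `λ₅λ₆ = (27/4)βL²`. Hence the product is positive, `4L > λ₅ + λ₆`, and the
discriminant equals `L²(1 - 27β)`, which is positive exactly when `β < 1/27`. -/

section LagrangeEigenvalues

variable {β s : ℝ} (L : ℝ)

theorem lagrange_eigenvalue_sum : 3/2 * (1 - s) * L + 3/2 * (1 + s) * L = 3 * L := by
  ring

theorem lagrange_eigenvalue_mul (hs : s ^ 2 = 1 - 3 * β) :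
    3/2 * (1 - s) * L * (3/2 * (1 + s) * L) = 27/4 * β * L ^ 2 := by
  linear_combination (-9/4 * L ^ 2) * hs

theorem lagrange_discriminant_eq (hs : s ^ 2 = 1 - 3 * β) :
    (4 * L - 3/2 * (1 - s) * L - 3/2 * (1 + s) * L) ^ 2
      - 4 * (3/2 * (1 - s) * L) * (3/2 * (1 + s) * L) = L ^ 2 * (1 - 27 * β) := by
  linear_combination (9 * L ^ 2) * hs

end LagrangeEigenvalues

theorem stmt_3 (β : ℝ) (hβ0 : 0 < β) (hβ1 : β ≤ 1/3)
    (lam5 lam6 : ℝ)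
    (h5 : lam5 = (3/2) * (1 - Real.sqrt (1 - 3*β)) * β ^ ((3:ℝ)/2))
    (h6 : lam6 = (3/2) * (1 + Real.sqrt (1 - 3*β)) * β ^ ((3:ℝ)/2)) :
    ((4 * β ^ ((3:ℝ)/2) - lam5 - lam6)^2 - 4 * lam5 * lam6 > 0 ∧
      lam5 * lam6 > 0 ∧
      4 * β ^ ((3:ℝ)/2) > lam5 + lam6) ↔ β < 1/27 := by
  have hs : Real.sqrt (1 - 3*β) ^ 2 = 1 - 3*β := Real.sq_sqrt (by linarith)
  have hL : 0 < β ^ ((3:ℝ)/2) := Real.rpow_pos_of_pos hβ0 _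
  subst h5 h6
  rw [lagrange_discriminant_eq _ hs, lagrange_eigenvalue_mul _ hs, lagrange_eigenvalue_sum]
  constructor
  · rintro ⟨hdisc, -, -⟩
    have := pos_of_mul_pos_right hdisc (sq_nonneg _)
    linarith
  · intro hβ
    refine ⟨mul_pos (by positivity) (by linarith), by positivity, by linarith⟩
end

section
/- With ω0 = β^{3/4}, ω1 = μ1·ω0, ω2 = μ2·ω0 where μ1 = √((1 − √(1 − 27β))/2), μ2 = √((1 + √(1 − 27β))/2) and β ∈ (0, 1/27): the resonance relation ω2 − 2ω1 = 0 holds if and only if β = 16/675. -/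
/-! Since ω0 = β^{3/4} > 0, the resonance ω2 = 2ω1 is μ2 = 2μ1. Squaring, with s = √(1 - 27β)
this reads (1 + s)/2 = 4(1 - s)/2, i.e. s = 3/5, i.e. 1 - 27β = 9/25. -/

theorem Real.sqrt_eq_two_mul_sqrt_iff {a b : ℝ} (ha : 0 ≤ a) (hb : 0 ≤ b) :
    √a = 2 * √b ↔ a = 4 * b := by
  rw [show (2 : ℝ) = √4 by rw [show (4 : ℝ) = 2 ^ 2 by norm_num, Real.sqrt_sq zero_le_two],
    ← Real.sqrt_mul zero_le_four, Real.sqrt_inj ha (by positivity)]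

theorem sqrt_half_add_eq_two_mul_sqrt_half_sub_iff {s : ℝ} (hs₀ : -1 ≤ s) (hs₁ : s ≤ 1) :
    √((1 + s) / 2) = 2 * √((1 - s) / 2) ↔ s = 3 / 5 := by
  rw [Real.sqrt_eq_two_mul_sqrt_iff (by linarith) (by linarith)]
  constructor <;> intro h <;> linarith

theorem sqrt_one_sub_mul_eq_three_fifths_iff {β : ℝ} (hβ : β ≤ 1 / 27) :
    √(1 - 27 * β) = 3 / 5 ↔ β = 16 / 675 := by
  rw [Real.sqrt_eq_iff_eq_sq (by linarith) (by norm_num)]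
  constructor <;> intro h <;> linarith

theorem stmt_6 (β : ℝ) (hβ0 : 0 < β) (hβ1 : β < 1/27)
    (μ1 μ2 ω0 ω1 ω2 : ℝ)
    (hμ1 : μ1 = Real.sqrt ((1 - Real.sqrt (1 - 27*β)) / 2))
    (hμ2 : μ2 = Real.sqrt ((1 + Real.sqrt (1 - 27*β)) / 2))
    (hω0 : ω0 = β ^ ((3:ℝ)/4)) (hω1 : ω1 = μ1 * ω0) (hω2 : ω2 = μ2 * ω0) :
    ω2 - 2*ω1 = 0 ↔ β = 16/675 := by
  have hω0_pos : 0 < ω0 := hω0 ▸ Real.rpow_pos_of_pos hβ0 _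
  have hs_le_one : √(1 - 27 * β) ≤ 1 := Real.sqrt_le_one.mpr (by linarith)
  have hs_nonneg : 0 ≤ √(1 - 27 * β) := Real.sqrt_nonneg _
  have hres : ω2 - 2 * ω1 = (μ2 - 2 * μ1) * ω0 := by rw [hω1, hω2]; ring
  rw [hres, mul_eq_zero, or_iff_left hω0_pos.ne', sub_eq_zero, hμ1, hμ2,
    sqrt_half_add_eq_two_mul_sqrt_half_sub_iff (by linarith) hs_le_one,
    sqrt_one_sub_mul_eq_three_fifths_iff hβ1.le]
end

section
/- With ω0 = β^{3/4}, ω1 = μ1·ω0, ω2 = μ2·ω0 where μ1 = √((1 − √(1 − 27β))/2), μ2 = √((1 + √(1 − 27β))/2) and β ∈ (0, 1/27): the resonance relation ω0 + ω1 − 2ω2 = 0 holds if and only if β = 64/1875. -/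
/-!
Since `ω0 = β ^ (3/4) > 0`, the resonance is `1 + μ1 = 2 μ2`. Put `s = √(1 - 27β)`, so that
`μ1² = (1 - s)/2` and `μ2² = (1 + s)/2`. Squaring `1 + μ1 = 2 μ2` makes it linear in `μ1`,
namely `μ1 = (1 + 5s)/4`; squaring again gives `(25s - 7)(s + 1) = 0`, so `s = 7/25`, i.e.
`1 - 27β = 49/625`, i.e. `β = 64/1875`. Conversely `s = 7/25` gives `μ1 = 3/5`, `μ2 = 4/5`.
-/

lemma one_add_sqrt_eq_two_mul_sqrt_iff {s : ℝ} (hs0 : 0 ≤ s) (hs1 : s ≤ 1) :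
    1 + √((1 - s) / 2) = 2 * √((1 + s) / 2) ↔ s = 7 / 25 := by
  constructor
  · intro h
    set a := √((1 - s) / 2)
    have ha : a ^ 2 = (1 - s) / 2 := Real.sq_sqrt (by linarith)
    have hb : √((1 + s) / 2) ^ 2 = (1 + s) / 2 := Real.sq_sqrt (by linarith)
    have hsq : (1 + a) ^ 2 = (2 * √((1 + s) / 2)) ^ 2 := by rw [h]
    have ha_lin : a = (1 + 5 * s) / 4 := by linear_combination (hsq - ha + 4 * hb) / 2
    have hquad : (25 * s - 7) * (s + 1) = 0 := by
      rw [ha_lin] at ha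
      linear_combination 16 * ha
    have h7 := (mul_eq_zero.mp hquad).resolve_right (by linarith)
    linarith
  · rintro rfl
    rw [show (1 - 7 / 25 : ℝ) / 2 = (3 / 5) ^ 2 by norm_num,
      show (1 + 7 / 25 : ℝ) / 2 = (4 / 5) ^ 2 by norm_num,
      Real.sqrt_sq (by norm_num), Real.sqrt_sq (by norm_num)]
    norm_num

theorem stmt_8_general (β : ℝ) (hβ0 : 0 < β)
    (μ1 μ2 ω0 ω1 ω2 : ℝ)
    (hμ1 : μ1 = Real.sqrt ((1 - Real.sqrt (1 - 27*β)) / 2))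
    (hμ2 : μ2 = Real.sqrt ((1 + Real.sqrt (1 - 27*β)) / 2))
    (hω0 : ω0 = β ^ ((3:ℝ)/4)) (hω1 : ω1 = μ1 * ω0) (hω2 : ω2 = μ2 * ω0) :
    ω0 + ω1 - 2*ω2 = 0 ↔ β = 64/1875 := by
  have hω0_pos : 0 < ω0 := hω0 ▸ Real.rpow_pos_of_pos hβ0 _
  have hs1 : √(1 - 27 * β) ≤ 1 := Real.sqrt_le_one.mpr (by linarith)
  calc ω0 + ω1 - 2 * ω2 = 0 ↔ (1 + μ1 - 2 * μ2) * ω0 = 0 := by rw [hω1, hω2]; ring_nf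
    _ ↔ 1 + μ1 = 2 * μ2 := by rw [mul_eq_zero, or_iff_left hω0_pos.ne', sub_eq_zero]
    _ ↔ √(1 - 27 * β) = 7 / 25 := by
      rw [hμ1, hμ2]; exact one_add_sqrt_eq_two_mul_sqrt_iff (Real.sqrt_nonneg _) hs1
    _ ↔ β = 64 / 1875 := by
      rw [Real.sqrt_eq_iff_mul_self_eq_of_pos (by norm_num)]
      constructor <;> intro h <;> linarith

theorem stmt_8 (β : ℝ) (hβ0 : 0 < β) (hβ1 : β < 1/27)
    (μ1 μ2 ω0 ω1 ω2 : ℝ)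
    (hμ1 : μ1 = Real.sqrt ((1 - Real.sqrt (1 - 27*β)) / 2))
    (hμ2 : μ2 = Real.sqrt ((1 + Real.sqrt (1 - 27*β)) / 2))
    (hω0 : ω0 = β ^ ((3:ℝ)/4)) (hω1 : ω1 = μ1 * ω0) (hω2 : ω2 = μ2 * ω0) :
    ω0 + ω1 - 2*ω2 = 0 ↔ β = 64/1875 :=
  stmt_8_general β hβ0 μ1 μ2 ω0 ω1 ω2 hμ1 hμ2 hω0 hω1 hω2
end

section
/- With ω0 = β^{3/4}, ω1 = μ1·ω0, ω2 = μ2·ω0 where μ1 = √((1 − √(1 − 27β))/2), μ2 = √((1 + √(1 − 27β))/2) and β ∈ (0, 1/27): the resonance relation ω2 − 3ω1 = 0 holds if and only if β = 1/75. -/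
/-! Since `ω₀ = β^{3/4} > 0`, the resonance `ω₂ = 3ω₁` is `μ₂ = 3μ₁`. Squaring, with
`s = √(1 - 27β) ∈ [0, 1]`, this is `(1 + s)/2 = 9(1 - s)/2`, i.e. `s = 4/5`, i.e. `β = 1/75`. -/

open Real

lemma sqrt_eq_three_mul_sqrt_iff {a b : ℝ} (ha : 0 ≤ a) (hb : 0 ≤ b) :
    √a = 3 * √b ↔ a = 9 * b := by
  have h3 : 3 * √b = √(9 * b) := by
    rw [sqrt_mul (by norm_num), show (9 : ℝ) = 3 * 3 by norm_num, sqrt_mul_self (by norm_num)]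
  rw [h3, sqrt_inj ha (by positivity)]

lemma sqrt_half_add_eq_three_mul_sqrt_half_sub_iff {s : ℝ} (hs0 : 0 ≤ s) (hs1 : s ≤ 1) :
    √((1 + s) / 2) = 3 * √((1 - s) / 2) ↔ s = 4 / 5 := by
  rw [sqrt_eq_three_mul_sqrt_iff (by linarith) (by linarith)]
  constructor <;> intro h <;> linarith

theorem stmt_9_general (β : ℝ) (hβ0 : 0 < β)
    (μ1 μ2 ω0 ω1 ω2 : ℝ)
    (hμ1 : μ1 = Real.sqrt ((1 - Real.sqrt (1 - 27*β)) / 2))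
    (hμ2 : μ2 = Real.sqrt ((1 + Real.sqrt (1 - 27*β)) / 2))
    (hω0 : ω0 = β ^ ((3:ℝ)/4)) (hω1 : ω1 = μ1 * ω0) (hω2 : ω2 = μ2 * ω0) :
    ω2 - 3*ω1 = 0 ↔ β = 1/75 := by
  have hω0_pos : 0 < ω0 := hω0 ▸ rpow_pos_of_pos hβ0 _
  have hs1 : √(1 - 27 * β) ≤ 1 := sqrt_le_one.mpr (by linarith)
  calc ω2 - 3 * ω1 = 0 ↔ (μ2 - 3 * μ1) * ω0 = 0 := by rw [hω1, hω2]; ring_nf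
    _ ↔ μ2 = 3 * μ1 := by rw [mul_eq_zero, sub_eq_zero, or_iff_left hω0_pos.ne']
    _ ↔ √(1 - 27 * β) = 4 / 5 := by
      rw [hμ1, hμ2]
      exact sqrt_half_add_eq_three_mul_sqrt_half_sub_iff (sqrt_nonneg _) hs1
    _ ↔ 4 / 5 * (4 / 5) = 1 - 27 * β := sqrt_eq_iff_mul_self_eq_of_pos (by norm_num)
    _ ↔ β = 1 / 75 := by constructor <;> intro h <;> linarith

theorem stmt_9 (β : ℝ) (hβ0 : 0 < β) (hβ1 : β < 1/27)
    (μ1 μ2 ω0 ω1 ω2 : ℝ)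
    (hμ1 : μ1 = Real.sqrt ((1 - Real.sqrt (1 - 27*β)) / 2))
    (hμ2 : μ2 = Real.sqrt ((1 + Real.sqrt (1 - 27*β)) / 2))
    (hω0 : ω0 = β ^ ((3:ℝ)/4)) (hω1 : ω1 = μ1 * ω0) (hω2 : ω2 = μ2 * ω0) :
    ω2 - 3*ω1 = 0 ↔ β = 1/75 :=
  stmt_9_general β hβ0 μ1 μ2 ω0 ω1 ω2 hμ1 hμ2 hω0 hω1 hω2
end

section
/- The set of β ∈ (0, 1/27) for which there exist integers (k0, k1, k2) ≠ (0,0,0) with k0·ω0 − k1·ω1 + k2·ω2 = 0, where ω0 = β^{3/4}, ω1 = μ1·ω0, ω2 = μ2·ω0 with μ1 = √((1 − √(1 − 27β))/2), μ2 = √((1 + √(1 − 27β))/2), is a countable dense subset of (0, 1/27). -/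
/-!
Dividing by `ω₀ > 0`, resonance means `k₀ - k₁ μ₁ + k₂ μ₂ = 0` with `μ₁² + μ₂² = 1`, and
`β ↦ μ₂` is a bijection of `(0, 1/27)` onto `(1/√2, 1)` with continuous inverse
`m ↦ 4 m² (1 - m²) / 27`. For each integer vector `k ≠ 0` the line `k₀ - k₁ x + k₂ y = 0` meets
the unit circle in at most two points, so only finitely many `β` are resonant with that `k`.
Conversely every `β` with rational `μ₂ = p / q` is resonant with `k = (-p, 0, q)`, and these
`β` are the image of a dense set under a continuous surjection, hence dense.
-/

open Real Set Polynomial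

noncomputable section

def lagrangeMu1 (β : ℝ) : ℝ := √((1 - √(1 - 27 * β)) / 2)

def lagrangeMu2 (β : ℝ) : ℝ := √((1 + √(1 - 27 * β)) / 2)

def lagrangeOmega0 (β : ℝ) : ℝ := β ^ ((3 : ℝ) / 4)

def lagrangeOmega1 (β : ℝ) : ℝ := lagrangeMu1 β * lagrangeOmega0 β

def lagrangeOmega2 (β : ℝ) : ℝ := lagrangeMu2 β * lagrangeOmega0 β

/-- The inverse of `lagrangeMu2` on `(0, 1/27)`. -/
def lagrangeMass (m : ℝ) : ℝ := 4 * m ^ 2 * (1 - m ^ 2) / 27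

def resonantSet : Set ℝ :=
  {β | β ∈ Ioo (0 : ℝ) (1 / 27) ∧ ∃ k0 k1 k2 : ℤ, ¬(k0 = 0 ∧ k1 = 0 ∧ k2 = 0) ∧
    (k0 : ℝ) * lagrangeOmega0 β - k1 * lagrangeOmega1 β + k2 * lagrangeOmega2 β = 0}

lemma sq_lagrangeMu1_add_sq_lagrangeMu2 {β : ℝ} (hβ : 0 ≤ β) :
    lagrangeMu1 β ^ 2 + lagrangeMu2 β ^ 2 = 1 := by
  have hs : √(1 - 27 * β) ≤ 1 := sqrt_le_one.mpr (by linarith)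
  rw [lagrangeMu1, lagrangeMu2, sq_sqrt (by linarith), sq_sqrt (by positivity)]
  ring

lemma lagrangeMu2_mem_Ioo {β : ℝ} (hβ : β ∈ Ioo (0 : ℝ) (1 / 27)) :
    lagrangeMu2 β ∈ Ioo (√(1 / 2)) 1 := by
  obtain ⟨h0, h1⟩ := hβ
  have hs_pos : 0 < √(1 - 27 * β) := sqrt_pos.mpr (by linarith)
  have hs_lt : √(1 - 27 * β) < 1 := (sqrt_lt' one_pos).mpr (by linarith)
  exact ⟨sqrt_lt_sqrt (by norm_num) (by linarith), (sqrt_lt' one_pos).mpr (by linarith)⟩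

lemma lagrangeMass_lagrangeMu2 {β : ℝ} (hβ : β ≤ 1 / 27) :
    lagrangeMass (lagrangeMu2 β) = β := by
  have hs : √(1 - 27 * β) ^ 2 = 1 - 27 * β := sq_sqrt (by linarith)
  rw [lagrangeMass, lagrangeMu2, sq_sqrt (by positivity)]
  linear_combination (-1 / 27 : ℝ) * hs

lemma injOn_lagrangeMu2 : InjOn lagrangeMu2 (Iic (1 / 27)) :=
  LeftInvOn.injOn fun _ hβ => lagrangeMass_lagrangeMu2 hβ

lemma lagrangeMu2_lagrangeMass {m : ℝ} (hm : √(1 / 2) ≤ m) :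
    lagrangeMu2 (lagrangeMass m) = m := by
  obtain ⟨hm0, hm2⟩ := sqrt_le_iff.mp hm
  have hsq : 1 - 27 * lagrangeMass m = (2 * m ^ 2 - 1) ^ 2 := by rw [lagrangeMass]; ring
  rw [lagrangeMu2, hsq, sqrt_sq (by linarith), show (1 + (2 * m ^ 2 - 1)) / 2 = m ^ 2 by ring,
    sqrt_sq hm0]

lemma lagrangeMass_mem_Ioo {m : ℝ} (hm : m ∈ Ioo (√(1 / 2)) 1) :
    lagrangeMass m ∈ Ioo (0 : ℝ) (1 / 27) := by
  have hm0 : 0 < m := (sqrt_nonneg _).trans_lt hm.1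
  have hm2 : 1 / 2 < m ^ 2 := (sqrt_lt' hm0).mp hm.1
  have hm_one : m ^ 2 < 1 := by nlinarith [hm.2]
  constructor
  · unfold lagrangeMass; nlinarith
  · unfold lagrangeMass; nlinarith [sq_pos_of_pos (show 0 < 2 * m ^ 2 - 1 by linarith)]

lemma mem_resonantSet_iff {β : ℝ} :
    β ∈ resonantSet ↔ β ∈ Ioo (0 : ℝ) (1 / 27) ∧ ∃ k0 k1 k2 : ℤ,
      ¬(k0 = 0 ∧ k1 = 0 ∧ k2 = 0) ∧ (k0 : ℝ) - k1 * lagrangeMu1 β + k2 * lagrangeMu2 β = 0 := by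
  refine and_congr_right fun hβ => exists₃_congr fun k0 k1 k2 => and_congr_right fun _ => ?_
  have hω : lagrangeOmega0 β ≠ 0 := (rpow_pos_of_pos hβ.1 _).ne'
  rw [lagrangeOmega1, lagrangeOmega2,
    show (k0 : ℝ) * lagrangeOmega0 β - k1 * (lagrangeMu1 β * lagrangeOmega0 β)
        + k2 * (lagrangeMu2 β * lagrangeOmega0 β)
      = (k0 - k1 * lagrangeMu1 β + k2 * lagrangeMu2 β) * lagrangeOmega0 β by ring,
    mul_eq_zero, or_iff_left hω]

lemma finite_setOf_quadratic_eq_zero {R : Type*} [CommRing R] [IsDomain R] {a b c : R}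
    (h : ¬(a = 0 ∧ b = 0 ∧ c = 0)) : {y : R | a * y ^ 2 + b * y + c = 0}.Finite := by
  set p : R[X] := C a * X ^ 2 + C b * X + C c
  have hp : p ≠ 0 := by
    contrapose! h
    refine ⟨?_, ?_, ?_⟩
    · simpa [p] using congrArg (coeff · 2) h
    · simpa [p] using congrArg (coeff · 1) h
    · simpa [p] using congrArg (coeff · 0) h
  exact (finite_setOfPred_isRoot hp).subset fun y hy => by simpa [p] using hy

lemma finite_setOf_line_inter_unitCircle {k0 k1 k2 : ℝ} (hk : ¬(k0 = 0 ∧ k1 = 0 ∧ k2 = 0)) :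
    {y : ℝ | ∃ x, x ^ 2 + y ^ 2 = 1 ∧ k0 - k1 * x + k2 * y = 0}.Finite := by
  -- eliminating `x` via `(k₁ x)² = (k₀ + k₂ y)²` leaves a nonzero quadratic in `y`
  have hquad : ¬(k1 ^ 2 + k2 ^ 2 = 0 ∧ 2 * k0 * k2 = 0 ∧ k0 ^ 2 - k1 ^ 2 = 0) := by
    rintro ⟨h2, -, h0⟩
    have hk1 : k1 = 0 := by nlinarith [sq_nonneg k1, sq_nonneg k2]
    have hk2 : k2 = 0 := by nlinarith [sq_nonneg k1, sq_nonneg k2]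
    exact hk ⟨by simpa [hk1] using h0, hk1, hk2⟩
  refine (finite_setOf_quadratic_eq_zero hquad).subset ?_
  rintro y ⟨x, hcirc, hline⟩
  show _ = _
  linear_combination (k1 * x + k0 + k2 * y) * hline + k1 ^ 2 * hcirc

lemma finite_setOf_resonant_with {k0 k1 k2 : ℤ} (hk : ¬(k0 = 0 ∧ k1 = 0 ∧ k2 = 0)) :
    {β | β ∈ Ioo (0 : ℝ) (1 / 27) ∧
      (k0 : ℝ) - k1 * lagrangeMu1 β + k2 * lagrangeMu2 β = 0}.Finite := by
  refine Finite.of_finite_image ?_ (injOn_lagrangeMu2.mono fun β hβ => hβ.1.2.le)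
  refine (finite_setOf_line_inter_unitCircle (k0 := k0) (k1 := k1) (k2 := k2) (by exact_mod_cast hk)).subset ?_
  rintro _ ⟨β, ⟨hβ, hres⟩, rfl⟩
  exact ⟨lagrangeMu1 β, sq_lagrangeMu1_add_sq_lagrangeMu2 hβ.1.le, hres⟩

lemma countable_resonantSet : resonantSet.Countable := by
  refine (countable_iUnion fun k : ℤ × ℤ × ℤ => countable_iUnion fun hk =>
    (finite_setOf_resonant_with (k0 := k.1) (k1 := k.2.1) (k2 := k.2.2) hk).countable).mono ?_
  intro β hβ
  obtain ⟨hβ, k0, k1, k2, hk, hres⟩ := mem_resonantSet_iff.mp hβ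
  exact mem_iUnion₂.mpr ⟨(k0, k1, k2), hk, hβ, hres⟩

lemma lagrangeMass_ratCast_mem_resonantSet {q : ℚ} (hq : (q : ℝ) ∈ Ioo (√(1 / 2)) 1) :
    lagrangeMass q ∈ resonantSet := by
  refine mem_resonantSet_iff.mpr ⟨lagrangeMass_mem_Ioo hq, -q.num, 0, q.den,
    fun h => q.den_nz (by exact_mod_cast h.2.2), ?_⟩
  have hnum : (q : ℝ) * q.den = q.num := by exact_mod_cast Rat.mul_den_eq_num q
  rw [lagrangeMu2_lagrangeMass hq.1.le]
  push_cast
  linear_combination hnum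

lemma Ioo_subset_closure_resonantSet : Ioo (0 : ℝ) (1 / 27) ⊆ closure resonantSet := by
  have hdense : Ioo (√(1 / 2)) 1 ⊆ closure (Ioo (√(1 / 2)) 1 ∩ range ((↑) : ℚ → ℝ)) :=
    Rat.denseRange_cast.open_subset_closure_inter isOpen_Ioo
  calc Ioo (0 : ℝ) (1 / 27)
      ⊆ lagrangeMass '' Ioo (√(1 / 2)) 1 := fun β hβ =>
        ⟨_, lagrangeMu2_mem_Ioo hβ, lagrangeMass_lagrangeMu2 hβ.2.le⟩
    _ ⊆ lagrangeMass '' closure (Ioo (√(1 / 2)) 1 ∩ range ((↑) : ℚ → ℝ)) := image_mono hdense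
    _ ⊆ closure (lagrangeMass '' (Ioo (√(1 / 2)) 1 ∩ range ((↑) : ℚ → ℝ))) :=
        image_closure_subset_closure_image (by unfold lagrangeMass; fun_prop)
    _ ⊆ closure resonantSet := closure_mono <| by
        rintro _ ⟨_, ⟨hq, q, rfl⟩, rfl⟩
        exact lagrangeMass_ratCast_mem_resonantSet hq

end

/-- The resonant set of mass parameters β for the Lagrange relative equilibrium. -/
theorem stmt_10 :
    Set.Countable {β : ℝ | β ∈ Set.Ioo (0:ℝ) (1/27) ∧
      ∃ k0 k1 k2 : ℤ, ¬(k0 = 0 ∧ k1 = 0 ∧ k2 = 0) ∧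
        (k0 : ℝ) * (β ^ ((3:ℝ)/4))
          - (k1 : ℝ) * (Real.sqrt ((1 - Real.sqrt (1 - 27*β)) / 2) * β ^ ((3:ℝ)/4))
          + (k2 : ℝ) * (Real.sqrt ((1 + Real.sqrt (1 - 27*β)) / 2) * β ^ ((3:ℝ)/4)) = 0} ∧
    Set.Ioo (0:ℝ) (1/27) ⊆ closure {β : ℝ | β ∈ Set.Ioo (0:ℝ) (1/27) ∧
      ∃ k0 k1 k2 : ℤ, ¬(k0 = 0 ∧ k1 = 0 ∧ k2 = 0) ∧
        (k0 : ℝ) * (β ^ ((3:ℝ)/4))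
          - (k1 : ℝ) * (Real.sqrt ((1 - Real.sqrt (1 - 27*β)) / 2) * β ^ ((3:ℝ)/4))
          + (k2 : ℝ) * (Real.sqrt ((1 + Real.sqrt (1 - 27*β)) / 2) * β ^ ((3:ℝ)/4)) = 0} :=
  ⟨countable_resonantSet, Ioo_subset_closure_resonantSet⟩
end

section
/- Fix υ > 6. The set of β ∈ (0, 1/27) such that the frequency vector ϖ = (ω0, −ω1, ω2) (with ω0 = β^{3/4}, ω1 = μ1ω0, ω2 = μ2ω0, μ1 = √((1 − √(1 − 27β))/2), μ2 = √((1 + √(1 − 27β))/2)) is (c, υ)-Diophantine for some c > 0 — i.e., |k0ω0 − k1ω1 + k2ω2| ≥ c/|k|^υ for all nonzero k ∈ ℤ³ with |k| = |k0| + |k1| + |k2| — has full Lebesgue measure in (0, 1/27). -/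
/-!
Fix k = (k₀, k₁, k₂) with (k₁, k₂) ≠ 0 and write s = √(1 - 27β), so that μ₁² = (1 - s)/2 and
μ₂² = (1 + s)/2. The product of k₀ - k₁μ₁ + k₂μ₂ with its three conjugates under μ₁ ↦ ±μ₁,
μ₂ ↦ ±μ₂ is a quadratic polynomial in s with leading coefficient ((k₁² + k₂²)/2)², and every
conjugate is at most |k| in absolute value. So if β ≥ a (hence ω₀ ≥ a) and the small divisor is
below c/|k|^υ, this quadratic is below (c/a)|k|^(3-υ), which traps s, and with it β, in two
intervals of total length O(√(c/a)|k|^((3-υ)/2)/(k₁² + k₂²)). For υ ≥ 6 this is dominated by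
√(c/a) times the summable weight ∏ᵢ (1 + |kᵢ|)^(-9/8), so the β ∈ [a, 1/27) that are not
(c, υ)-Diophantine have measure O(√(c/a)). Letting c → 0 and then a → 0 gives the theorem.
-/

open MeasureTheory Set Filter Topology

lemma exists_near_root_of_abs_quadratic_le {A : ℝ} (hA : 0 < A) (b C δ : ℝ) :
    ∃ r₁ r₂ : ℝ, ∀ s, |A * s ^ 2 + b * s + C| ≤ δ →
      |s - r₁| ≤ √(δ / A) ∨ |s - r₂| ≤ √(δ / A) := by
  have near : ∀ r s, A * (s - r) ^ 2 ≤ δ → |s - r| ≤ √(δ / A) := fun r s h => by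
    rw [← Real.sqrt_sq_eq_abs]
    exact Real.sqrt_le_sqrt (by rwa [le_div_iff₀ hA, mul_comm])
  set r := -b / (2 * A)
  set e := C - b ^ 2 / (4 * A)
  have hvertex : ∀ s, A * s ^ 2 + b * s + C = A * (s - r) ^ 2 + e := fun s => by
    simp only [r, e]; field_simp; ring
  rcases le_or_gt 0 e with he | he
  · refine ⟨r, r, fun s hs => .inl (near r s ?_)⟩
    rw [hvertex, abs_of_nonneg (by positivity)] at hs
    linarith
  · set h := √(-e / A)
    have hh : A * h ^ 2 = -e := by
      rw [Real.sq_sqrt (div_pos (neg_pos.2 he) hA).le]; field_simp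
    have hroots : ∀ s, A * s ^ 2 + b * s + C = A * ((s - (r + h)) * (s - (r - h))) := fun s => by
      rw [hvertex]; linear_combination hh
    refine ⟨r + h, r - h, fun s hs => ?_⟩
    rw [hroots, abs_mul, abs_of_pos hA, abs_mul] at hs
    rcases le_total |s - (r + h)| |s - (r - h)| with hle | hle
    · refine .inl (near _ s ?_)
      calc A * (s - (r + h)) ^ 2 = A * (|s - (r + h)| * |s - (r + h)|) := by rw [← sq, sq_abs]
        _ ≤ A * (|s - (r + h)| * |s - (r - h)|) := by gcongr
        _ ≤ δ := hs
    · refine .inr (near _ s ?_)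
      calc A * (s - (r - h)) ^ 2 = A * (|s - (r - h)| * |s - (r - h)|) := by rw [← sq, sq_abs]
        _ ≤ A * (|s - (r + h)| * |s - (r - h)|) := by gcongr
        _ ≤ δ := hs

lemma conjugate_product_eq (k0 k1 k2 s x y : ℝ) (hx : x ^ 2 = (1 - s) / 2)
    (hy : y ^ 2 = (1 + s) / 2) :
    (k0 - k1 * x + k2 * y) *
        ((k0 + k1 * x + k2 * y) * (k0 + k1 * x - k2 * y) * (k0 - k1 * x - k2 * y)) =
      (k0 ^ 2 + (k2 ^ 2 - k1 ^ 2) / 2 + (k1 ^ 2 + k2 ^ 2) / 2 * s) ^ 2 -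
        2 * k0 ^ 2 * k2 ^ 2 * (1 + s) := by
  calc _ = (k0 ^ 2 + k2 ^ 2 * y ^ 2 - k1 ^ 2 * x ^ 2) ^ 2 - 4 * k0 ^ 2 * k2 ^ 2 * y ^ 2 := by ring
    _ = _ := by rw [hx, hy]; ring

lemma abs_add_mul_add_mul_le (k0 k1 k2 : ℝ) {x y : ℝ} (hx : |x| ≤ 1) (hy : |y| ≤ 1) :
    |k0 + k1 * x + k2 * y| ≤ |k0| + |k1| + |k2| := by
  calc |k0 + k1 * x + k2 * y| ≤ |k0| + |k1| * |x| + |k2| * |y| := by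
        rw [← abs_mul, ← abs_mul]; exact abs_add_three _ _ _
    _ ≤ |k0| + |k1| * 1 + |k2| * 1 := by gcongr
    _ = |k0| + |k1| + |k2| := by ring

lemma add_rpow_neg_div_sq_add_sq_le {a b c : ℝ} (ha : 0 ≤ a) (hb : 0 ≤ b) (hc : 0 ≤ c)
    (hbc : 1 ≤ b + c) :
    (a + b + c) ^ (-(3 / 2) : ℝ) / ((b ^ 2 + c ^ 2) / 2) ≤
      64 * ((1 + a) ^ (-(9 / 8) : ℝ) * ((1 + b) ^ (-(9 / 8) : ℝ) * (1 + c) ^ (-(9 / 8) : ℝ))) := by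
  set q := b + c
  have hq : 0 < q := by linarith
  have hK : 0 < a + b + c := by linarith
  have hV : q ^ 2 / 4 ≤ (b ^ 2 + c ^ 2) / 2 := by nlinarith [sq_nonneg (b - c)]
  have hP : (1 + b) * (1 + c) / 4 ≤ q ^ 2 := by nlinarith [mul_nonneg hb hc]
  have hsplit : (a + b + c) ^ (-(3 / 2) : ℝ) ≤ (1 + a) ^ (-(9 / 8) : ℝ) * q ^ (-(1 / 4) : ℝ) := by
    calc (a + b + c) ^ (-(3 / 2) : ℝ) ≤ (a + b + c) ^ (-(9 / 8) + -(1 / 4) : ℝ) :=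
          Real.rpow_le_rpow_of_exponent_le (by linarith) (by norm_num)
      _ = (a + b + c) ^ (-(9 / 8) : ℝ) * (a + b + c) ^ (-(1 / 4) : ℝ) := Real.rpow_add hK _ _
      _ ≤ (1 + a) ^ (-(9 / 8) : ℝ) * q ^ (-(1 / 4) : ℝ) := by
          gcongr ?_ * ?_
          · exact Real.rpow_le_rpow_of_nonpos (by linarith) (by linarith) (by norm_num)
          · exact Real.rpow_le_rpow_of_nonpos hq (by linarith) (by norm_num)
  have hq94 : q ^ (-(1 / 4) : ℝ) / (q ^ 2 / 4) = 4 * (q ^ 2) ^ (-(9 / 8) : ℝ) := by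
    rw [← Real.rpow_natCast_mul hq.le, ← Real.rpow_natCast q 2, div_div_eq_mul_div,
      mul_comm _ (4 : ℝ), mul_div_assoc, ← Real.rpow_sub hq]
    norm_num
  have hprod : (q ^ 2) ^ (-(9 / 8) : ℝ) ≤
      16 * ((1 + b) ^ (-(9 / 8) : ℝ) * (1 + c) ^ (-(9 / 8) : ℝ)) := by
    calc (q ^ 2) ^ (-(9 / 8) : ℝ) ≤ ((1 + b) * (1 + c) / 4) ^ (-(9 / 8) : ℝ) :=
          Real.rpow_le_rpow_of_nonpos (by positivity) hP (by norm_num)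
      _ = 4 ^ (9 / 8 : ℝ) * ((1 + b) ^ (-(9 / 8) : ℝ) * (1 + c) ^ (-(9 / 8) : ℝ)) := by
          rw [Real.div_rpow (by positivity) (by norm_num), Real.mul_rpow (by positivity)
            (by positivity), Real.rpow_neg (by norm_num : (0 : ℝ) ≤ 4), div_inv_eq_mul, mul_comm]
      _ ≤ 16 * ((1 + b) ^ (-(9 / 8) : ℝ) * (1 + c) ^ (-(9 / 8) : ℝ)) := by
          gcongr
          calc (4 : ℝ) ^ (9 / 8 : ℝ) ≤ 4 ^ (2 : ℝ) :=
                Real.rpow_le_rpow_of_exponent_le (by norm_num) (by norm_num)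
            _ = 16 := by norm_num
  calc (a + b + c) ^ (-(3 / 2) : ℝ) / ((b ^ 2 + c ^ 2) / 2)
      ≤ (1 + a) ^ (-(9 / 8) : ℝ) * q ^ (-(1 / 4) : ℝ) / (q ^ 2 / 4) := by gcongr
    _ = (1 + a) ^ (-(9 / 8) : ℝ) * (4 * (q ^ 2) ^ (-(9 / 8) : ℝ)) := by
        rw [mul_div_assoc, hq94]
    _ ≤ (1 + a) ^ (-(9 / 8) : ℝ) *
          (4 * (16 * ((1 + b) ^ (-(9 / 8) : ℝ) * (1 + c) ^ (-(9 / 8) : ℝ)))) := by gcongr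
    _ = _ := by ring

lemma sqrt_div_rpow_mul_pow_le {x K υ : ℝ} (hx : 0 ≤ x) (hK : 1 ≤ K) (hυ : 6 ≤ υ) :
    √(x / K ^ υ * K ^ 3) ≤ √x * K ^ (-(3 / 2) : ℝ) := by
  have hK0 : 0 < K := by linarith
  rw [← Real.sqrt_sq (mul_nonneg (Real.sqrt_nonneg x) (Real.rpow_nonneg hK0.le _))]
  refine Real.sqrt_le_sqrt ?_
  rw [mul_pow, Real.sq_sqrt hx, ← Real.rpow_mul_natCast hK0.le, ← Real.rpow_natCast K 3,
    div_mul_eq_mul_div, mul_div_assoc, ← Real.rpow_sub hK0]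
  gcongr
  push_cast; linarith

lemma measure_eq_zero_of_forall_le_ofReal {α : Type*} [MeasurableSpace α] {μ : Measure α}
    {s : Set α} {f : ℝ → ℝ} {a : ℝ} (ha : 0 < a) (hf : Tendsto f (𝓝[>] 0) (𝓝 0))
    (h : ∀ c ∈ Ioc 0 a, μ s ≤ ENNReal.ofReal (f c)) : μ s = 0 := by
  have hf' : Tendsto (fun c => ENNReal.ofReal (f c)) (𝓝[>] 0) (𝓝 0) := by
    simpa using ENNReal.tendsto_ofReal hf
  exact le_antisymm (ge_of_tendsto hf' (eventually_of_mem (Ioc_mem_nhdsGT ha) h)) bot_le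

namespace LagrangeFrequencies

noncomputable def μ₁ (β : ℝ) : ℝ := √((1 - √(1 - 27 * β)) / 2)

noncomputable def μ₂ (β : ℝ) : ℝ := √((1 + √(1 - 27 * β)) / 2)

noncomputable def ω₀ (β : ℝ) : ℝ := β ^ ((3 : ℝ) / 4)

noncomputable def ω₁ (β : ℝ) : ℝ := μ₁ β * ω₀ β

noncomputable def ω₂ (β : ℝ) : ℝ := μ₂ β * ω₀ β

def IsDiophantine (υ c β : ℝ) : Prop :=
  ∀ k0 k1 k2 : ℤ, ¬(k0 = 0 ∧ k1 = 0 ∧ k2 = 0) →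
    |(k0 : ℝ) * ω₀ β - (k1 : ℝ) * ω₁ β + (k2 : ℝ) * ω₂ β|
      ≥ c / ((|k0| + |k1| + |k2| : ℤ) : ℝ) ^ υ

def resonanceSet (υ c : ℝ) (k : ℤ × ℤ × ℤ) : Set ℝ :=
  {β | |(k.1 : ℝ) * ω₀ β - (k.2.1 : ℝ) * ω₁ β + (k.2.2 : ℝ) * ω₂ β|
      < c / ((|k.1| + |k.2.1| + |k.2.2| : ℤ) : ℝ) ^ υ}

noncomputable def weight (j : ℤ) : ℝ := (1 + |(j : ℝ)|) ^ (-(9 / 8) : ℝ)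

lemma weight_nonneg (j : ℤ) : 0 ≤ weight j := by unfold weight; positivity

lemma summable_weight : Summable weight := by
  refine (Real.summable_abs_int_rpow (by norm_num : (1 : ℝ) < 9 / 8)).of_norm_bounded_eventually ?_
  filter_upwards [(finite_singleton (0 : ℤ)).compl_mem_cofinite] with j hj
  have hj : (0 : ℝ) < |(j : ℝ)| := abs_pos.2 (Int.cast_ne_zero.2 hj)
  rw [Real.norm_of_nonneg (weight_nonneg j)]
  exact Real.rpow_le_rpow_of_nonpos hj (by linarith) (by norm_num)

lemma μ₁_sq {β : ℝ} (hβ : 0 ≤ β) : μ₁ β ^ 2 = (1 - √(1 - 27 * β)) / 2 :=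
  Real.sq_sqrt (by linarith [Real.sqrt_le_one.2 (by linarith : 1 - 27 * β ≤ 1)])

lemma μ₂_sq (β : ℝ) : μ₂ β ^ 2 = (1 + √(1 - 27 * β)) / 2 :=
  Real.sq_sqrt (by linarith [Real.sqrt_nonneg (1 - 27 * β)])

lemma abs_μ₁_le_one (β : ℝ) : |μ₁ β| ≤ 1 := by
  rw [μ₁, abs_of_nonneg (Real.sqrt_nonneg _)]
  exact Real.sqrt_le_one.2 (by linarith [Real.sqrt_nonneg (1 - 27 * β)])

lemma abs_μ₂_le_one {β : ℝ} (hβ : 0 ≤ β) : |μ₂ β| ≤ 1 := by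
  rw [μ₂, abs_of_nonneg (Real.sqrt_nonneg _)]
  exact Real.sqrt_le_one.2 (by linarith [Real.sqrt_le_one.2 (by linarith : 1 - 27 * β ≤ 1)])

lemma volume_abs_sqrt_sub_le (r ρ : ℝ) :
    volume {β ∈ Icc (0 : ℝ) (1 / 27) | |√(1 - 27 * β) - r| ≤ ρ} ≤ ENNReal.ofReal ρ := by
  refine (Real.volume_le_diam _).trans (Metric.ediam_le fun β₁ h₁ β₂ h₂ => ?_)
  obtain ⟨⟨h₁0, h₁1⟩, hr₁⟩ := h₁
  obtain ⟨⟨h₂0, h₂1⟩, hr₂⟩ := h₂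
  rw [edist_dist, Real.dist_eq]
  refine ENNReal.ofReal_le_ofReal ?_
  set s₁ := √(1 - 27 * β₁)
  set s₂ := √(1 - 27 * β₂)
  have hs₁ : s₁ ^ 2 = 1 - 27 * β₁ := Real.sq_sqrt (by linarith)
  have hs₂ : s₂ ^ 2 = 1 - 27 * β₂ := Real.sq_sqrt (by linarith)
  have hs₁1 : s₁ ≤ 1 := Real.sqrt_le_one.2 (by linarith)
  have hs₂1 : s₂ ≤ 1 := Real.sqrt_le_one.2 (by linarith)
  have hsub : |s₁ - s₂| ≤ 2 * ρ := by
    linarith [abs_sub_le s₁ r s₂, abs_sub_comm r s₂]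
  have hadd : |s₁ + s₂| ≤ 2 := by
    rw [abs_of_nonneg (by positivity)]; linarith
  calc |β₁ - β₂| = |s₁ - s₂| * |s₁ + s₂| / 27 := by
        rw [← abs_mul, show (s₁ - s₂) * (s₁ + s₂) = 27 * (β₂ - β₁) by
          linear_combination hs₁ - hs₂, abs_mul, abs_sub_comm]
        norm_num
    _ ≤ 2 * ρ * 2 / 27 := by gcongr; linarith [abs_nonneg (s₁ - r)]
    _ ≤ ρ := by linarith [abs_nonneg (s₁ - r)]

theorem volume_abs_sub_mul_μ₁_add_mul_μ₂_le (k0 k1 k2 η : ℝ) (hk : 0 < k1 ^ 2 + k2 ^ 2) :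
    volume {β ∈ Icc (0 : ℝ) (1 / 27) | |k0 - k1 * μ₁ β + k2 * μ₂ β| ≤ η} ≤
      ENNReal.ofReal (2 * √(η * (|k0| + |k1| + |k2|) ^ 3) / ((k1 ^ 2 + k2 ^ 2) / 2)) := by
  set K := |k0| + |k1| + |k2|
  set V := (k1 ^ 2 + k2 ^ 2) / 2
  set U := k0 ^ 2 + (k2 ^ 2 - k1 ^ 2) / 2
  have hV : 0 < V := by positivity
  obtain ⟨r₁, r₂, hr⟩ := exists_near_root_of_abs_quadratic_le (pow_pos hV 2)
    (2 * U * V - 2 * k0 ^ 2 * k2 ^ 2) (U ^ 2 - 2 * k0 ^ 2 * k2 ^ 2) (η * K ^ 3)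
  set ρ := √(η * K ^ 3 / V ^ 2)
  have hsub : {β ∈ Icc (0 : ℝ) (1 / 27) | |k0 - k1 * μ₁ β + k2 * μ₂ β| ≤ η} ⊆
      {β ∈ Icc (0 : ℝ) (1 / 27) | |√(1 - 27 * β) - r₁| ≤ ρ} ∪
        {β ∈ Icc (0 : ℝ) (1 / 27) | |√(1 - 27 * β) - r₂| ≤ ρ} := by
    rintro β ⟨hβ, hη⟩
    have hx := abs_μ₁_le_one β
    have hy := abs_μ₂_le_one hβ.1
    have hx' : |-μ₁ β| ≤ 1 := by rwa [abs_neg]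
    have hy' : |-μ₂ β| ≤ 1 := by rwa [abs_neg]
    have hconj : |(k0 + k1 * μ₁ β + k2 * μ₂ β) * (k0 + k1 * μ₁ β - k2 * μ₂ β) *
        (k0 - k1 * μ₁ β - k2 * μ₂ β)| ≤ K ^ 3 := by
      have h₁ := abs_add_mul_add_mul_le k0 k1 k2 hx hy
      have h₂ := abs_add_mul_add_mul_le k0 k1 k2 hx hy'
      have h₃ := abs_add_mul_add_mul_le k0 k1 k2 hx' hy'
      simp only [mul_neg, ← sub_eq_add_neg] at h₂ h₃
      rw [abs_mul, abs_mul, pow_three, ← mul_assoc]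
      gcongr
    have hquad : |V ^ 2 * √(1 - 27 * β) ^ 2 + (2 * U * V - 2 * k0 ^ 2 * k2 ^ 2) * √(1 - 27 * β)
        + (U ^ 2 - 2 * k0 ^ 2 * k2 ^ 2)| ≤ η * K ^ 3 := by
      calc _ = |(k0 - k1 * μ₁ β + k2 * μ₂ β) * ((k0 + k1 * μ₁ β + k2 * μ₂ β) *
            (k0 + k1 * μ₁ β - k2 * μ₂ β) * (k0 - k1 * μ₁ β - k2 * μ₂ β))| := by
            rw [conjugate_product_eq k0 k1 k2 _ _ _ (μ₁_sq hβ.1) (μ₂_sq β)]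
            simp only [U, V]
            ring_nf
        _ ≤ η * K ^ 3 := by
            rw [abs_mul]; exact mul_le_mul hη hconj (abs_nonneg _) ((abs_nonneg _).trans hη)
    exact (hr _ hquad).imp (fun h => ⟨hβ, h⟩) (fun h => ⟨hβ, h⟩)
  calc _ ≤ _ := measure_mono hsub
    _ ≤ ENNReal.ofReal ρ + ENNReal.ofReal ρ := (measure_union_le _ _).trans
        (add_le_add (volume_abs_sqrt_sub_le _ _) (volume_abs_sqrt_sub_le _ _))
    _ = _ := by
        rw [← ENNReal.ofReal_add (Real.sqrt_nonneg _) (Real.sqrt_nonneg _),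
          Real.sqrt_div' _ (by positivity), Real.sqrt_sq hV.le]
        ring_nf

lemma mul_ω₀_sub_mul_ω₁_add_mul_ω₂ (k0 k1 k2 β : ℝ) :
    k0 * ω₀ β - k1 * ω₁ β + k2 * ω₂ β = (k0 - k1 * μ₁ β + k2 * μ₂ β) * ω₀ β := by
  simp only [ω₁, ω₂]; ring

lemma le_ω₀ {a β : ℝ} (ha : 0 < a) (hβ : β ∈ Ico a (1 / 27)) : a ≤ ω₀ β :=
  hβ.1.trans (Real.self_le_rpow_of_le_one (by linarith [hβ.1]) (by linarith [hβ.2]) (by norm_num))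

lemma resonanceSet_zero_zero_inter_Ico_eq_empty {υ a c : ℝ} (hυ : 0 < υ) (ha : 0 < a)
    (hc : 0 ≤ c) (hca : c ≤ a) (k0 : ℤ) : resonanceSet υ c (k0, 0, 0) ∩ Ico a (1 / 27) = ∅ := by
  refine eq_empty_of_forall_notMem fun β ⟨hres, hβ⟩ => ?_
  simp only [resonanceSet, mem_ofPred_eq, Int.cast_zero, zero_mul, sub_zero, add_zero, abs_zero,
    Int.cast_abs, abs_mul] at hres
  rcases eq_or_ne k0 0 with rfl | hk0
  -- the threshold is then c / 0 ^ υ = 0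
  · simp [Real.zero_rpow hυ.ne'] at hres
  · have hk : (1 : ℝ) ≤ |(k0 : ℝ)| := by exact_mod_cast Int.one_le_abs hk0
    have hω := le_ω₀ ha hβ
    have : c / |(k0 : ℝ)| ^ υ ≤ c := div_le_self hc (Real.one_le_rpow hk hυ.le)
    rw [abs_of_nonneg (by linarith : 0 ≤ ω₀ β)] at hres
    nlinarith

lemma resonanceSet_inter_Ico_subset {υ a c : ℝ} (ha : 0 < a) (k0 k1 k2 : ℤ) :
    resonanceSet υ c (k0, k1, k2) ∩ Ico a (1 / 27) ⊆
      {β ∈ Icc (0 : ℝ) (1 / 27) | |k0 - k1 * μ₁ β + k2 * μ₂ β| ≤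
        c / a / (|(k0 : ℝ)| + |(k1 : ℝ)| + |(k2 : ℝ)|) ^ υ} := by
  rintro β ⟨hres, hβ⟩
  have hω := le_ω₀ ha hβ
  refine ⟨⟨by linarith [hβ.1], hβ.2.le⟩, ?_⟩
  simp only [resonanceSet, mem_ofPred_eq, mul_ω₀_sub_mul_ω₁_add_mul_ω₂, abs_mul, Int.cast_add,
    Int.cast_abs] at hres
  rw [abs_of_nonneg (by linarith : 0 ≤ ω₀ β)] at hres
  rw [div_right_comm, le_div_iff₀ ha]
  exact (mul_le_mul_of_nonneg_left hω (abs_nonneg _)).trans hres.le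

theorem volume_resonanceSet_inter_Ico_le {υ a c : ℝ} (hυ : 6 ≤ υ) (ha : 0 < a) (hc : 0 < c)
    (hca : c ≤ a) (k : ℤ × ℤ × ℤ) :
    volume (resonanceSet υ c k ∩ Ico a (1 / 27)) ≤
      ENNReal.ofReal (√(c / a) * (128 * (weight k.1 * (weight k.2.1 * weight k.2.2)))) := by
  obtain ⟨k0, k1, k2⟩ := k
  by_cases hk : k1 = 0 ∧ k2 = 0
  · obtain ⟨rfl, rfl⟩ := hk
    rw [resonanceSet_zero_zero_inter_Ico_eq_empty (by linarith) ha hc.le hca, measure_empty]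
    exact zero_le
  set K : ℝ := |(k0 : ℝ)| + |(k1 : ℝ)| + |(k2 : ℝ)|
  have hk12 : (1 : ℝ) ≤ |(k1 : ℝ)| + |(k2 : ℝ)| := by
    rcases not_and_or.1 hk with h | h
    · linarith [abs_nonneg (k2 : ℝ), (by exact_mod_cast Int.one_le_abs h : (1 : ℝ) ≤ |(k1 : ℝ)|)]
    · linarith [abs_nonneg (k1 : ℝ), (by exact_mod_cast Int.one_le_abs h : (1 : ℝ) ≤ |(k2 : ℝ)|)]
  have hK : 1 ≤ K := by linarith [abs_nonneg (k0 : ℝ)]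
  have hV : 0 < (k1 : ℝ) ^ 2 + (k2 : ℝ) ^ 2 := by
    nlinarith [sq_abs (k1 : ℝ), sq_abs (k2 : ℝ), sq_nonneg (|(k1 : ℝ)| - |(k2 : ℝ)|)]
  have hw := add_rpow_neg_div_sq_add_sq_le (abs_nonneg (k0 : ℝ)) (abs_nonneg (k1 : ℝ))
    (abs_nonneg (k2 : ℝ)) hk12
  have hs := sqrt_div_rpow_mul_pow_le (div_pos hc ha).le hK hυ
  refine (measure_mono (resonanceSet_inter_Ico_subset ha k0 k1 k2)).trans
    ((volume_abs_sub_mul_μ₁_add_mul_μ₂_le _ _ _ _ hV).trans (ENNReal.ofReal_le_ofReal ?_))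
  calc 2 * √(c / a / K ^ υ * K ^ 3) / ((k1 ^ 2 + k2 ^ 2) / 2)
      ≤ 2 * (√(c / a) * K ^ (-(3 / 2) : ℝ)) / ((k1 ^ 2 + k2 ^ 2) / 2) := by gcongr
    _ = 2 * √(c / a) * (K ^ (-(3 / 2) : ℝ) / ((|(k1 : ℝ)| ^ 2 + |(k2 : ℝ)| ^ 2) / 2)) := by
        simp only [sq_abs]; ring
    _ ≤ 2 * √(c / a) * (64 * (weight k0 * (weight k1 * weight k2))) := by gcongr; exact hw
    _ = _ := by ring

lemma setOf_not_isDiophantine_subset (υ c : ℝ) :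
    {β | ¬IsDiophantine υ c β} ⊆ ⋃ k, resonanceSet υ c k := fun β hβ => by
  simp only [IsDiophantine, mem_ofPred_eq, not_forall, not_le] at hβ
  obtain ⟨k0, k1, k2, -, hlt⟩ := hβ
  exact mem_iUnion.2 ⟨(k0, k1, k2), hlt⟩

theorem volume_not_isDiophantine_inter_Ico_le {υ a c : ℝ} (hυ : 6 ≤ υ) (ha : 0 < a)
    (hc : 0 < c) (hca : c ≤ a) :
    volume ({β | ¬IsDiophantine υ c β} ∩ Ico a (1 / 27)) ≤
      ENNReal.ofReal
        (√(c / a) * (128 * ∑' k : ℤ × ℤ × ℤ, weight k.1 * (weight k.2.1 * weight k.2.2))) := by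
  have hnonneg (k : ℤ × ℤ) : 0 ≤ weight k.1 * weight k.2 :=
    mul_nonneg (weight_nonneg _) (weight_nonneg _)
  have hsum : Summable fun k : ℤ × ℤ × ℤ => weight k.1 * (weight k.2.1 * weight k.2.2) :=
    summable_weight.mul_of_nonneg (summable_weight.mul_of_nonneg summable_weight
      weight_nonneg weight_nonneg) weight_nonneg hnonneg
  calc _ ≤ volume (⋃ k, resonanceSet υ c k ∩ Ico a (1 / 27)) := by
        rw [← iUnion_inter]
        exact measure_mono (inter_subset_inter_left _ (setOf_not_isDiophantine_subset υ c))
    _ ≤ ∑' k, volume (resonanceSet υ c k ∩ Ico a (1 / 27)) := measure_iUnion_le _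
    _ ≤ ∑' k : ℤ × ℤ × ℤ, ENNReal.ofReal
          (√(c / a) * (128 * (weight k.1 * (weight k.2.1 * weight k.2.2)))) :=
        ENNReal.tsum_le_tsum fun k => volume_resonanceSet_inter_Ico_le hυ ha hc hca k
    _ = _ := by
        rw [← ENNReal.ofReal_tsum_of_nonneg (fun k => mul_nonneg (Real.sqrt_nonneg _)
          (mul_nonneg (by norm_num) (mul_nonneg (weight_nonneg _) (hnonneg _))))
          ((hsum.mul_left 128).mul_left _), tsum_mul_left, tsum_mul_left]

end LagrangeFrequencies

open LagrangeFrequencies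

theorem stmt_11 (υ : ℝ) (hυ : υ > 6) :
    MeasureTheory.volume
      (Set.Ioo (0:ℝ) (1/27) \
        {β : ℝ | ∃ c > (0:ℝ), ∀ k0 k1 k2 : ℤ, ¬(k0 = 0 ∧ k1 = 0 ∧ k2 = 0) →
          |(k0 : ℝ) * (β ^ ((3:ℝ)/4))
            - (k1 : ℝ) * (Real.sqrt ((1 - Real.sqrt (1 - 27*β)) / 2) * β ^ ((3:ℝ)/4))
            + (k2 : ℝ) * (Real.sqrt ((1 + Real.sqrt (1 - 27*β)) / 2) * β ^ ((3:ℝ)/4))|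
            ≥ c / ((|k0| + |k1| + |k2| : ℤ) : ℝ) ^ υ}) = 0 := by
  change volume (Ioo (0 : ℝ) (1 / 27) \ {β | ∃ c > 0, IsDiophantine υ c β}) = 0
  have hcover : Ioo (0 : ℝ) (1 / 27) \ {β | ∃ c > 0, IsDiophantine υ c β} ⊆
      ⋃ n : ℕ, {β | ∀ c > 0, ¬IsDiophantine υ c β} ∩ Ico (1 / ((n : ℝ) + 1)) (1 / 27) := by
    rintro β ⟨⟨hβ0, hβ1⟩, hβ⟩
    obtain ⟨n, hn⟩ := exists_nat_one_div_lt hβ0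
    exact mem_iUnion.2 ⟨n, fun c hc hdio => hβ ⟨c, hc, hdio⟩, hn.le, hβ1⟩
  refine measure_mono_null hcover (measure_iUnion_null fun n => ?_)
  refine measure_eq_zero_of_forall_le_ofReal (by positivity) ?_ fun c hc =>
    (measure_mono (inter_subset_inter_left _ (ofPred_subset_ofPred.2 fun β hβ => hβ c hc.1))).trans
      (volume_not_isDiophantine_inter_Ico_le hυ.le (by positivity) hc.1 hc.2)
  exact (Continuous.tendsto' (by fun_prop) 0 0 (by simp)).mono_left nhdsWithin_le_nhds
end

section
/- There exists a constant σ > 0 such that for every δ > 0 and every y ∈ ℝ, the Lebesgue measure of the set {x ∈ [−2π, 2π] : y − δ < sin x < y + δ} does not exceed σ·√δ. -/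
/-!
On `[-π/2, π/2]` the sine is inverted by `arcsin`, and every point of `[-2π, 2π]` is carried
to that interval by one of five maps `x ↦ ±x + kπ` preserving `sin`. So the set in question is
covered by five intervals of length `arcsin (y + δ) - arcsin (y - δ)`. Near the extrema of `sin`
this length is of order `√δ`, not `δ`: `arcsin` is `1/2`-Hölder, because
`sin b - sin a ≥ 2 ((b - a) / π) ^ 2` on `[-π/2, π/2]`.
-/

open Real MeasureTheory Set

namespace Real

lemma sin_arcsin_eq_projIcc (x : ℝ) :
    sin (arcsin x) = projIcc (-1) 1 (neg_le_self zero_le_one) x := by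
  rw [← arcsin_projIcc]
  exact sin_arcsin (projIcc _ _ _ x).2.1 (projIcc _ _ _ x).2.2

lemma sin_arcsin_sub_sin_arcsin_le (u v : ℝ) :
    sin (arcsin v) - sin (arcsin u) ≤ |v - u| := by
  simp only [sin_arcsin_eq_projIcc]
  exact (le_abs_self _).trans (abs_projIcc_sub_projIcc _)

/-- Jordan's inequality bounds both factors of `sin b - sin a = 2 sin (d/2) cos ((a+b)/2)`,
`d = b - a`, below by `d / π`. -/
lemma two_mul_sq_div_pi_le_sin_sub_sin {a b : ℝ} (ha : -(π / 2) ≤ a) (hab : a ≤ b)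
    (hb : b ≤ π / 2) : 2 * ((b - a) / π) ^ 2 ≤ sin b - sin a := by
  have hsin : (b - a) / π ≤ sin ((b - a) / 2) := by
    have := mul_le_sin (x := (b - a) / 2) (by linarith) (by linarith)
    rwa [show 2 / π * ((b - a) / 2) = (b - a) / π by ring] at this
  have hcos : (b - a) / π ≤ cos ((b + a) / 2) := by
    have habs : |(b + a) / 2| ≤ π / 2 - (b - a) / 2 := abs_le.2 ⟨by linarith, by linarith⟩
    have := cos_le_cos_of_nonneg_of_le_pi (abs_nonneg _) (by linarith [pi_pos]) habs
    rw [cos_pi_div_two_sub, cos_abs] at this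
    linarith
  have hd : 0 ≤ (b - a) / π := div_nonneg (by linarith) pi_pos.le
  rw [sin_sub_sin]
  nlinarith [mul_le_mul hsin hcos hd (hd.trans hsin)]

lemma arcsin_sub_arcsin_le (u v : ℝ) : arcsin v - arcsin u ≤ π * √(|v - u| / 2) := by
  rcases le_total (arcsin v) (arcsin u) with h | h
  · have : 0 ≤ π * √(|v - u| / 2) := by positivity
    linarith
  have hgap := two_mul_sq_div_pi_le_sin_sub_sin (neg_pi_div_two_le_arcsin u) h
    (arcsin_le_pi_div_two v)
  have hlip := sin_arcsin_sub_sin_arcsin_le u v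
  have : (arcsin v - arcsin u) / π ≤ √(|v - u| / 2) :=
    le_sqrt_of_sq_le (by linarith)
  rwa [div_le_iff₀' pi_pos] at this

lemma mem_Icc_arcsin_of_sin_mem_Icc {z u v : ℝ} (hz : z ∈ Icc (-(π / 2)) (π / 2))
    (hsin : sin z ∈ Icc u v) : z ∈ Icc (arcsin u) (arcsin v) := by
  rw [← arcsin_sin hz.1 hz.2]
  exact ⟨monotone_arcsin hsin.1, monotone_arcsin hsin.2⟩

lemma exists_sin_eq_of_mem_Icc {x : ℝ} (hx : x ∈ Icc (-(2 * π)) (2 * π)) :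
    ∃ z ∈ Icc (-(π / 2)) (π / 2), sin z = sin x ∧
      (x = z ∨ x = π - z ∨ x = -π - z ∨ x = z - 2 * π ∨ x = z + 2 * π) := by
  obtain ⟨hx₁, hx₂⟩ := hx
  rcases le_total x (-(3 * π / 2)) with h₁ | h₁
  · exact ⟨x + 2 * π, ⟨by linarith, by linarith⟩, sin_add_two_pi x, by grind⟩
  rcases le_total x (-(π / 2)) with h₂ | h₂
  · refine ⟨-π - x, ⟨by linarith, by linarith⟩, ?_, by grind⟩
    rw [show -π - x = π - (x + 2 * π) by ring, sin_pi_sub, sin_add_two_pi]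
  rcases le_total x (π / 2) with h₃ | h₃
  · exact ⟨x, ⟨h₂, h₃⟩, rfl, by grind⟩
  rcases le_total x (3 * π / 2) with h₄ | h₄
  · exact ⟨π - x, ⟨by linarith, by linarith⟩, sin_pi_sub x, by grind⟩
  · exact ⟨x - 2 * π, ⟨by linarith, by linarith⟩, sin_sub_two_pi x, by grind⟩

lemma volume_setOf_sin_mem_Icc_le (u v : ℝ) :
    volume {x ∈ Icc (-(2 * π)) (2 * π) | sin x ∈ Icc u v} ≤
      5 * ENNReal.ofReal (arcsin v - arcsin u) := by
  set a := arcsin u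
  set b := arcsin v
  let c : Fin 5 → ℝ := ![a, π - b, -π - b, a - 2 * π, a + 2 * π]
  have hcover :
      {x ∈ Icc (-(2 * π)) (2 * π) | sin x ∈ Icc u v} ⊆ ⋃ i, Icc (c i) (c i + (b - a)) := by
    rintro x ⟨hx, hsin⟩
    obtain ⟨z, hz, hsz, hxz⟩ := exists_sin_eq_of_mem_Icc hx
    obtain ⟨h₁, h₂⟩ := mem_Icc_arcsin_of_sin_mem_Icc hz (hsz ▸ hsin)
    rw [mem_iUnion]
    rcases hxz with rfl | rfl | rfl | rfl | rfl
    exacts [⟨0, by simp [c]; grind⟩, ⟨1, by simp [c]; grind⟩, ⟨2, by simp [c]; grind⟩,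
      ⟨3, by simp [c]; grind⟩, ⟨4, by simp [c]; grind⟩]
  calc volume {x ∈ Icc (-(2 * π)) (2 * π) | sin x ∈ Icc u v}
      ≤ volume (⋃ i, Icc (c i) (c i + (b - a))) := measure_mono hcover
    _ ≤ ∑ i, volume (Icc (c i) (c i + (b - a))) := measure_iUnion_fintype_le _ _
    _ = 5 * ENNReal.ofReal (b - a) := by simp [volume_Icc]

end Real

theorem stmt_12 :
    ∃ σ > (0:ℝ), ∀ δ > (0:ℝ), ∀ y : ℝ,
      MeasureTheory.volume
        {x : ℝ | x ∈ Set.Icc (-(2*Real.pi)) (2*Real.pi) ∧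
          y - δ < Real.sin x ∧ Real.sin x < y + δ}
        ≤ ENNReal.ofReal (σ * Real.sqrt δ) := by
  refine ⟨5 * π, by positivity, fun δ hδ y => ?_⟩
  have hgap : arcsin (y + δ) - arcsin (y - δ) ≤ π * √δ := by
    have := arcsin_sub_arcsin_le (y - δ) (y + δ)
    rwa [show |y + δ - (y - δ)| / 2 = δ by rw [abs_of_pos (by linarith)]; ring] at this
  calc volume {x | x ∈ Icc (-(2 * π)) (2 * π) ∧ y - δ < sin x ∧ sin x < y + δ}
      ≤ volume {x ∈ Icc (-(2 * π)) (2 * π) | sin x ∈ Icc (y - δ) (y + δ)} :=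
        measure_mono fun x ⟨hx, h₁, h₂⟩ => ⟨hx, h₁.le, h₂.le⟩
    _ ≤ 5 * ENNReal.ofReal (π * √δ) :=
        (volume_setOf_sin_mem_Icc_le _ _).trans (by gcongr)
    _ = ENNReal.ofReal (5 * π * √δ) := by
        rw [mul_assoc, ENNReal.ofReal_mul (by norm_num : (0:ℝ) ≤ 5), ENNReal.ofReal_ofNat]
end

section
/- Fix integers (k0, k1, k2) with k1² + k2² > 0, and real numbers c ∈ (0,1) and υ > 6. Write |k| = |k0| + |k1| + |k2|. Then the Lebesgue measure of the set of ϑ ∈ (π/4, π/2) satisfying |k0 − k1·cos ϑ + k2·sin ϑ| < c/|k|^υ is at most σ·√c / ((k1² + k2²)^{1/4} · |k|^{υ/2}) for some absolute constant σ > 0. -/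
open Real MeasureTheory Set

/-!
Write `-k₁ cos ϑ + k₂ sin ϑ = A sin (ϑ - θ₀)` with `A = √(k₁² + k₂²)`; the condition becomes
`|sin ψ - a| < ε / A` for `ψ = ϑ - θ₀` and `ε = c / |k|^υ`. On each interval `|ψ - nπ| ≤ π/2`
sine satisfies `(x - y)² ≤ (π²/2) |sin x - sin y|` (Jordan's inequality
`sin t ≥ 2t/π` applied to both factors of `sin x - sin y = 2 sin ((x-y)/2) cos ((x+y)/2)`), so
the sublevel set there has diameter at most `π √(ε / A)`. An interval of length `π` meets at
most two such intervals, whence the bound with `σ = 2π`.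
-/

theorem sq_sub_le_mul_abs_sin_sub_sin (n : ℤ) {x y : ℝ} (hx : |x - n * π| ≤ π / 2)
    (hy : |y - n * π| ≤ π / 2) : (x - y) ^ 2 ≤ π ^ 2 / 2 * |sin x - sin y| := by
  have hπ := pi_pos
  set h := |(x - y) / 2| with hh
  set m := (x + y) / 2 - n * π with hm
  have hmh : |m| ≤ π / 2 - h := by
    rw [abs_le] at hx hy ⊢
    rcases le_total 0 ((x - y) / 2) with hxy | hxy
    · rw [hh, abs_of_nonneg hxy]; constructor <;> linarith
    · rw [hh, abs_of_nonpos hxy]; constructor <;> linarith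
  have hsin_h : 2 / π * h ≤ sin h := mul_le_sin (abs_nonneg _) (by linarith [abs_nonneg m])
  have hsin_half : sin h ≤ |sin ((x - y) / 2)| := by
    rcases abs_choice ((x - y) / 2) with e | e <;> rw [hh, e]
    · exact le_abs_self _
    · rw [sin_neg]; exact neg_le_abs _
  have hcos_half : sin h ≤ |cos ((x + y) / 2)| := by
    rw [show (x + y) / 2 = m + n * π by ring, cos_add_int_mul_pi, abs_mul, abs_zpow, abs_neg,
      abs_one, one_zpow, one_mul, ← cos_abs, ← cos_pi_div_two_sub]
    have hπh : π / 2 - h ≤ π := by linarith [abs_nonneg ((x - y) / 2)]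
    exact (cos_le_cos_of_nonneg_of_le_pi (abs_nonneg m) hπh hmh).trans (le_abs_self _)
  have hsq : (x - y) ^ 2 = 4 * h ^ 2 := by rw [hh, sq_abs]; ring
  have hprod : (2 / π * h) * (2 / π * h) ≤ |sin ((x - y) / 2)| * |cos ((x + y) / 2)| :=
    mul_le_mul (hsin_h.trans hsin_half) (hsin_h.trans hcos_half) (by positivity) (abs_nonneg _)
  rw [sin_sub_sin, abs_mul, abs_mul, abs_two, hsq]
  calc 4 * h ^ 2 = π ^ 2 / 2 * (2 * ((2 / π * h) * (2 / π * h))) := by field_simp; ring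
    _ ≤ π ^ 2 / 2 * (2 * (|sin ((x - y) / 2)| * |cos ((x + y) / 2)|)) := by gcongr
    _ = _ := by ring

theorem volume_abs_sub_lt_le_of_sq_sub_le {f : ℝ → ℝ} {s : Set ℝ} {K : ℝ} (hK : 0 ≤ K)
    (hf : ∀ x ∈ s, ∀ y ∈ s, (x - y) ^ 2 ≤ K * |f x - f y|) (a δ : ℝ) :
    volume {x ∈ s | |f x - a| < δ} ≤ ENNReal.ofReal √(2 * K * δ) := by
  refine (Real.volume_le_diam _).trans (Metric.ediam_le fun x hx y hy => ?_)
  rw [edist_dist, Real.dist_eq]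
  refine ENNReal.ofReal_le_ofReal (Real.abs_le_sqrt ?_)
  have hfxy : |f x - f y| ≤ 2 * δ := by
    linarith [abs_sub_le (f x) a (f y), abs_sub_comm (f y) a, hx.2, hy.2]
  calc (x - y) ^ 2 ≤ K * |f x - f y| := hf x hx.1 y hy.1
    _ ≤ K * (2 * δ) := by gcongr
    _ = 2 * K * δ := by ring

theorem volume_abs_sin_sub_lt_le (u a δ : ℝ) :
    volume {ψ ∈ Ioo u (u + π) | |sin ψ - a| < δ} ≤ ENNReal.ofReal (2 * π * √δ) := by
  have hπ := pi_pos
  set n := ⌊u / π + 1 / 2⌋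
  have hu : u + π / 2 = (u / π + 1 / 2) * π := by field_simp
  have hn₁ : n * π ≤ u + π / 2 := by
    rw [hu]; exact mul_le_mul_of_nonneg_right (Int.floor_le _) hπ.le
  have hn₂ : u + π / 2 < (n + 1) * π := by
    rw [hu]; exact mul_lt_mul_of_pos_right (Int.lt_floor_add_one _) hπ
  set S := fun m : ℤ => {ψ ∈ {ψ | |ψ - m * π| ≤ π / 2} | |sin ψ - a| < δ}
  have hS : ∀ m : ℤ, volume (S m) ≤ ENNReal.ofReal (π * √δ) := fun m => by
    have := volume_abs_sub_lt_le_of_sq_sub_le (by positivity)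
      (fun x hx y hy => sq_sub_le_mul_abs_sin_sub_sin m hx hy) a δ
    rwa [show 2 * (π ^ 2 / 2) * δ = π ^ 2 * δ by ring, Real.sqrt_mul (sq_nonneg π),
      Real.sqrt_sq hπ.le] at this
  have hcover : {ψ ∈ Ioo u (u + π) | |sin ψ - a| < δ} ⊆ S n ∪ S (n + 1) := by
    rintro ψ ⟨⟨hψ₁, hψ₂⟩, hψ⟩
    rcases le_or_gt ψ (n * π + π / 2) with h | h
    · refine Or.inl ⟨?_, hψ⟩
      show |ψ - n * π| ≤ π / 2
      exact abs_le.2 ⟨by linarith, by linarith⟩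
    · refine Or.inr ⟨?_, hψ⟩
      show |ψ - ((n + 1 : ℤ) : ℝ) * π| ≤ π / 2
      push_cast
      exact abs_le.2 ⟨by linarith, by linarith⟩
  calc volume {ψ ∈ Ioo u (u + π) | |sin ψ - a| < δ}
      ≤ volume (S n) + volume (S (n + 1)) := (measure_mono hcover).trans (measure_union_le _ _)
    _ ≤ ENNReal.ofReal (π * √δ) + ENNReal.ofReal (π * √δ) := add_le_add (hS n) (hS (n + 1))
    _ = ENNReal.ofReal (2 * π * √δ) := by
      rw [← ENNReal.ofReal_add (by positivity) (by positivity)]; ring_nf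

theorem exists_mul_cos_add_mul_sin_eq (p q : ℝ) :
    ∃ θ, ∀ ϑ, p * cos ϑ + q * sin ϑ = √(p ^ 2 + q ^ 2) * sin (ϑ - θ) := by
  set z : ℂ := ⟨q, -p⟩
  have hz : ‖z‖ = √(p ^ 2 + q ^ 2) := by
    rw [Complex.norm_def, Complex.normSq_mk]; congr 1; ring
  refine ⟨z.arg, fun ϑ => ?_⟩
  have hc := Complex.norm_mul_cos_arg z
  have hs := Complex.norm_mul_sin_arg z
  rw [hz] at hc hs
  rw [sin_sub]
  linear_combination (-sin ϑ) * hc + cos ϑ * hs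

theorem volume_abs_add_mul_cos_add_mul_sin_lt_le (b p q u ε : ℝ) (hpq : 0 < p ^ 2 + q ^ 2) :
    volume {ϑ ∈ Ioo u (u + π) | |b + p * cos ϑ + q * sin ϑ| < ε} ≤
      ENNReal.ofReal (2 * π * √(ε / √(p ^ 2 + q ^ 2))) := by
  obtain ⟨θ, hθ⟩ := exists_mul_cos_add_mul_sin_eq p q
  set A := √(p ^ 2 + q ^ 2)
  have hA : 0 < A := Real.sqrt_pos.2 hpq
  have hshift : {ϑ ∈ Ioo u (u + π) | |b + p * cos ϑ + q * sin ϑ| < ε} =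
      (· + -θ) ⁻¹' {ψ ∈ Ioo (u - θ) (u - θ + π) | |sin ψ - -b / A| < ε / A} := by
    ext ϑ
    have hϑ : |b + p * cos ϑ + q * sin ϑ| = A * |sin (ϑ + -θ) - -b / A| := by
      rw [add_assoc, hθ, ← sub_eq_add_neg, ← abs_of_pos hA, ← abs_mul, abs_of_pos hA]
      congr 1; field_simp; ring
    simp only [mem_ofPred_eq, mem_preimage, mem_Ioo, hϑ, lt_div_iff₀' hA]
    constructor <;> rintro ⟨⟨h₁, h₂⟩, h₃⟩ <;> exact ⟨⟨by linarith, by linarith⟩, h₃⟩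
  rw [hshift, measure_preimage_add_right]
  exact volume_abs_sin_sub_lt_le _ _ _

theorem stmt_13 :
    ∃ σ > (0:ℝ), ∀ k0 k1 k2 : ℤ, k1^2 + k2^2 > 0 →
      ∀ c υ : ℝ, 0 < c → c < 1 → υ > 6 →
        MeasureTheory.volume
          {ϑ : ℝ | ϑ ∈ Set.Ioo (Real.pi/4) (Real.pi/2) ∧
            |(k0 : ℝ) - (k1 : ℝ) * Real.cos ϑ + (k2 : ℝ) * Real.sin ϑ|
              < c / ((|k0| + |k1| + |k2| : ℤ) : ℝ) ^ υ}
          ≤ ENNReal.ofReal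
              (σ * Real.sqrt c /
                (((k1:ℝ)^2 + (k2:ℝ)^2) ^ ((1:ℝ)/4) * ((|k0| + |k1| + |k2| : ℤ) : ℝ) ^ (υ/2))) := by
  refine ⟨2 * π, by positivity, fun k0 k1 k2 hk c υ _ _ _ => ?_⟩
  set K : ℝ := ((|k0| + |k1| + |k2| : ℤ) : ℝ)
  set X : ℝ := (k1 : ℝ) ^ 2 + (k2 : ℝ) ^ 2
  have hK : 0 ≤ K := Int.cast_nonneg (by positivity)
  have hX : 0 < X := by simp only [X]; exact_mod_cast hk
  have hsub : {ϑ : ℝ | ϑ ∈ Ioo (π / 4) (π / 2) ∧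
        |(k0 : ℝ) - (k1 : ℝ) * cos ϑ + (k2 : ℝ) * sin ϑ| < c / K ^ υ} ⊆
      {ϑ ∈ Ioo (π / 4) (π / 4 + π) | |(k0 : ℝ) + -(k1 : ℝ) * cos ϑ + k2 * sin ϑ| < c / K ^ υ} :=
    fun ϑ ⟨⟨h₁, h₂⟩, h₃⟩ => ⟨⟨h₁, by linarith [pi_pos]⟩, by rwa [neg_mul, ← sub_eq_add_neg]⟩
  have hbound : 2 * π * √(c / K ^ υ / √X) = 2 * π * √c / (X ^ ((1 : ℝ) / 4) * K ^ (υ / 2)) := by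
    rw [div_div, Real.sqrt_div' _ (by positivity), Real.sqrt_mul (by positivity)]
    simp only [Real.sqrt_eq_rpow, ← Real.rpow_mul hK, ← Real.rpow_mul hX.le]
    ring_nf
  calc _ ≤ _ := measure_mono hsub
    _ ≤ _ := volume_abs_add_mul_cos_add_mul_sin_lt_le _ _ _ _ _ (by rwa [neg_sq])
    _ = _ := by rw [neg_sq, hbound]
end
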